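/- Let a > 0, n ∈ ℕ, and set t := a². Suppose f is holomorphic on an open set U ⊆ ℂ \ {0, a, −a} and satisfies f''(z) + (2a²/(z(z² − a²)) − 2z) f'(z) + ((2nz² + √(2n)·a)/(z² − a²)) f(z) = 0 on U. Define g(u) := f(a√u) using the principal branch of the square root on ℂ \ (−∞,0]. Then for every u ∈ ℂ \ (−∞,0] with u ≠ 1 and a√u ∈ U, g satisfies the confluent Heun equation g''(u) + (1/(u−1) − 1/(2u) − t) g'(u) + ((2ntu + √(2nt))/(4u(u−1))) g(u) = 0. -/

import Mathlib

/-!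
Writing `u = s²` with `s = u^(1/2)` and `z = a s`, the chain rule gives
`g' = a/(2s) · f'(z)` and `g'' = a²/(4s²) · f''(z) - a/(4s³) · f'(z)`. Substituting these and
`t = a²`, `√(2nt) = √(2n)·a`, the left-hand side of the confluent Heun equation becomes exactly
`a²/(4s²)` times the left-hand side of the equation for `f` at `z`.
-/

open Complex Filter Topology

theorem deriv_deriv_comp_of_hasDerivAt {𝕜 F : Type*} [NontriviallyNormedField 𝕜]
    [NormedAddCommGroup F] [NormedSpace 𝕜 F] {f : 𝕜 → F} {φ φ' : 𝕜 → 𝕜} {φ'' : 𝕜} {u : 𝕜}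
    (hf : ∀ᶠ z in 𝓝 (φ u), DifferentiableAt 𝕜 f z)
    (hf' : DifferentiableAt 𝕜 (deriv f) (φ u))
    (hφ : ∀ᶠ w in 𝓝 u, HasDerivAt φ (φ' w) w) (hφ' : HasDerivAt φ' φ'' u) :
    deriv (deriv (f ∘ φ)) u = φ' u ^ 2 • deriv (deriv f) (φ u) + φ'' • deriv f (φ u) := by
  have hφu : HasDerivAt φ (φ' u) u := hφ.self_of_nhds
  have hderiv : deriv (f ∘ φ) =ᶠ[𝓝 u] fun w => φ' w • deriv f (φ w) := by
    filter_upwards [hφ, hφu.continuousAt.eventually hf] with w hφw hfw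
    rw [deriv.scomp w hfw hφw.differentiableAt, hφw.deriv]
  have hprod : HasDerivAt (fun w => φ' w • deriv f (φ w))
      (φ' u • φ' u • deriv (deriv f) (φ u) + φ'' • deriv f (φ u)) u :=
    hφ'.smul (hf'.hasDerivAt.scomp u hφu)
  rw [hderiv.deriv_eq, hprod.deriv, smul_smul, sq]

theorem hasDerivAt_cpow_half {u : ℂ} (hu : u ∈ slitPlane) :
    HasDerivAt (· ^ (1 / 2 : ℂ)) (2 * u ^ (1 / 2 : ℂ))⁻¹ u := by
  refine (hasStrictDerivAt_cpow_const hu).hasDerivAt.congr_deriv ?_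
  rw [show (1 / 2 : ℂ) - 1 = -(1 / 2) by norm_num, cpow_neg]
  ring

theorem cpow_half_sq (u : ℂ) : (u ^ (1 / 2 : ℂ)) ^ 2 = u := by
  rw [one_div]; exact cpow_ofNat_inv_pow u 2

theorem cpow_half_ne_zero {u : ℂ} (hu : u ≠ 0) : u ^ (1 / 2 : ℂ) ≠ 0 :=
  fun h => hu (by rw [← cpow_half_sq u, h, zero_pow two_ne_zero])

theorem hasDerivAt_inv_two_mul_cpow_half {u : ℂ} (hu : u ∈ slitPlane) :
    HasDerivAt (fun w => (2 * w ^ (1 / 2 : ℂ))⁻¹) (-(4 * (u ^ (1 / 2 : ℂ)) ^ 3)⁻¹) u := by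
  have hs := cpow_half_ne_zero (slitPlane_ne_zero hu)
  refine (((hasDerivAt_cpow_half hu).const_mul 2).inv
    (mul_ne_zero two_ne_zero hs)).congr_deriv ?_
  field_simp
  ring

theorem confluent_heun_of_gap_equation {a s F₀ F₁ F₂ r N : ℂ} (ha : a ≠ 0) (hs : s ≠ 0)
    (hs₁ : s ^ 2 - 1 ≠ 0)
    (h : F₂ + (2 * a ^ 2 / (a * s * ((a * s) ^ 2 - a ^ 2)) - 2 * (a * s)) * F₁
      + (2 * N * (a * s) ^ 2 + r * a) / ((a * s) ^ 2 - a ^ 2) * F₀ = 0) :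
    (a * (2 * s)⁻¹) ^ 2 * F₂ + a * -(4 * s ^ 3)⁻¹ * F₁
      + (1 / (s ^ 2 - 1) - 1 / (2 * s ^ 2) - a ^ 2) * (a * (2 * s)⁻¹ * F₁)
      + (2 * N * a ^ 2 * s ^ 2 + r * a) / (4 * s ^ 2 * (s ^ 2 - 1)) * F₀ = 0 := by
  have hden : (a * s) ^ 2 - a ^ 2 = a ^ 2 * (s ^ 2 - 1) := by ring
  rw [hden] at h
  have hscale : (a * (2 * s)⁻¹) ^ 2 * F₂ + a * -(4 * s ^ 3)⁻¹ * F₁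
      + (1 / (s ^ 2 - 1) - 1 / (2 * s ^ 2) - a ^ 2) * (a * (2 * s)⁻¹ * F₁)
      + (2 * N * a ^ 2 * s ^ 2 + r * a) / (4 * s ^ 2 * (s ^ 2 - 1)) * F₀
      = a ^ 2 / (4 * s ^ 2) * (F₂
        + (2 * a ^ 2 / (a * s * (a ^ 2 * (s ^ 2 - 1))) - 2 * (a * s)) * F₁
        + (2 * N * (a * s) ^ 2 + r * a) / (a ^ 2 * (s ^ 2 - 1)) * F₀) := by
    field_simp
    ring
  rw [hscale, h, mul_zero]

theorem gaussian_gap_to_confluent_heun_general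
    (a : ℝ) (ha : 0 < a) (n : ℕ) (t : ℝ) (ht : t = a ^ 2)
    (U : Set ℂ) (hU : IsOpen U)
    (f : ℂ → ℂ) (hf : DifferentiableOn ℂ f U)
    (hode : ∀ z ∈ U, deriv (deriv f) z
      + (2 * (a : ℂ) ^ 2 / (z * (z ^ 2 - (a : ℂ) ^ 2)) - 2 * z) * deriv f z
      + ((2 * (n : ℂ) * z ^ 2 + (Real.sqrt (2 * n) : ℂ) * (a : ℂ))
          / (z ^ 2 - (a : ℂ) ^ 2)) * f z = 0)
    (g : ℂ → ℂ) (hg : ∀ u : ℂ, g u = f ((a : ℂ) * u ^ (1 / 2 : ℂ))) :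
    ∀ u ∈ Complex.slitPlane, u ≠ 1 → (a : ℂ) * u ^ (1 / 2 : ℂ) ∈ U →
      deriv (deriv g) u
      + (1 / (u - 1) - 1 / (2 * u) - (t : ℂ)) * deriv g u
      + ((2 * (n : ℂ) * (t : ℂ) * u + (Real.sqrt (2 * n * t) : ℂ))
          / (4 * u * (u - 1))) * g u = 0 := by
  intro u hu hu1 hzU
  have hgφ : g = f ∘ fun w => (a : ℂ) * w ^ (1 / 2 : ℂ) := funext hg
  have hφ : ∀ᶠ w in 𝓝 u, HasDerivAt (fun w => (a : ℂ) * w ^ (1 / 2 : ℂ))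
      ((a : ℂ) * (2 * w ^ (1 / 2 : ℂ))⁻¹) w := by
    filter_upwards [isOpen_slitPlane.mem_nhds hu] with w hw
    exact (hasDerivAt_cpow_half hw).const_mul _
  have hfU : ∀ z ∈ U, AnalyticAt ℂ f z := fun z hz => hf.analyticAt (hU.mem_nhds hz)
  have hg' :
      deriv g u = (a : ℂ) * (2 * u ^ (1 / 2 : ℂ))⁻¹ * deriv f (a * u ^ (1 / 2 : ℂ)) := by
    rw [hgφ, deriv.scomp u (hfU _ hzU).differentiableAt hφ.self_of_nhds.differentiableAt,
      hφ.self_of_nhds.deriv, smul_eq_mul]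
  have hg'' := deriv_deriv_comp_of_hasDerivAt (φ := fun w => (a : ℂ) * w ^ (1 / 2 : ℂ))
    (hU.eventually_mem hzU |>.mono fun z hz => (hfU z hz).differentiableAt)
    (hfU _ hzU).deriv.differentiableAt hφ
    ((hasDerivAt_inv_two_mul_cpow_half hu).const_mul (a : ℂ))
  rw [← hgφ] at hg''
  have hsqrt : (Real.sqrt (2 * n * t) : ℂ) = Real.sqrt (2 * n) * a := by
    rw [ht, Real.sqrt_mul (by positivity), Real.sqrt_sq ha.le, Complex.ofReal_mul]
  have hs₀ := cpow_half_ne_zero (slitPlane_ne_zero hu)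
  have hsq := cpow_half_sq u
  rw [hg'', hg', hg u, hsqrt, ht]
  simp only [smul_eq_mul]
  push_cast
  generalize u ^ (1 / 2 : ℂ) = s at hs₀ hsq hzU ⊢
  subst hsq
  exact confluent_heun_of_gap_equation (by exact_mod_cast ha.ne') hs₀ (sub_ne_zero.mpr hu1)
    (hode _ hzU)

/-- The change of variable z = a√u, t = a², transforms the large-n equation for the
Gaussian weight with a gap, e^{-x²}(1 - χ_{(-a,a)}(x)), into a confluent Heun equation. -/
theorem gaussian_gap_to_confluent_heun
    (a : ℝ) (ha : 0 < a) (n : ℕ) (t : ℝ) (ht : t = a ^ 2)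
    (U : Set ℂ) (hU : IsOpen U) (hUsub : U ⊆ ({0, (a : ℂ), -(a : ℂ)} : Set ℂ)ᶜ)
    (f : ℂ → ℂ) (hf : DifferentiableOn ℂ f U)
    (hode : ∀ z ∈ U, deriv (deriv f) z
      + (2 * (a : ℂ) ^ 2 / (z * (z ^ 2 - (a : ℂ) ^ 2)) - 2 * z) * deriv f z
      + ((2 * (n : ℂ) * z ^ 2 + (Real.sqrt (2 * n) : ℂ) * (a : ℂ))
          / (z ^ 2 - (a : ℂ) ^ 2)) * f z = 0)
    (g : ℂ → ℂ) (hg : ∀ u : ℂ, g u = f ((a : ℂ) * u ^ (1 / 2 : ℂ))) :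
    ∀ u ∈ Complex.slitPlane, u ≠ 1 → (a : ℂ) * u ^ (1 / 2 : ℂ) ∈ U →
      deriv (deriv g) u
      + (1 / (u - 1) - 1 / (2 * u) - (t : ℂ)) * deriv g u
      + ((2 * (n : ℂ) * (t : ℂ) * u + (Real.sqrt (2 * n * t) : ℂ))
          / (4 * u * (u - 1))) * g u = 0 :=
  gaussian_gap_to_confluent_heun_general a ha n t ht U hU f hf hode g hg
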